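/- Let n stationary points be placed equidistantly at positions 0, 1/(n-1), 2/(n-1), ..., 1 on the real line, and let one additional point p traverse the interval [0,1] monotonically. Then during a full monotone traversal of [0,1] by p, any maintenance scheme that keeps a k-optimal EMST must change the combinatorial solution at least Ω(min(1/k, n)) times. -/
import Mathlib


/-- `G` is the sorted-order path on the labels `Fin N` for the one-dimensional configuration
`y`: two labels are adjacent exactly if their values are consecutive in the order on `ℝ`.
This is the combinatorial EMST of points on a line. -/
def IsSortedPath {N : ℕ} (y : Fin N → ℝ) (G : SimpleGraph (Fin N)) : Prop :=
  ∀ i j : Fin N, G.Adj i j ↔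
    ((y i < y j ∧ ∀ l : Fin N, ¬(y i < y l ∧ y l < y j)) ∨
     (y j < y i ∧ ∀ l : Fin N, ¬(y j < y l ∧ y l < y i)))

/-- In any open interval of length `> 1/(n-1)` inside `[0,1]` there is a grid point. -/
private lemma grid_point {n : ℕ} (hn : 2 ≤ n) {u v : ℝ} (hu : 0 ≤ u) (hv : v ≤ 1)
    (huv : u + 1/((n:ℝ)-1) < v) :
    ∃ j : Fin n, u < (j:ℝ)/((n:ℝ)-1) ∧ (j:ℝ)/((n:ℝ)-1) < v := by
  have hc : (1:ℝ) ≤ (n:ℝ) - 1 := by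
    have h2 : (2:ℝ) ≤ (n:ℝ) := by exact_mod_cast hn
    linarith
  have hc0 : (0:ℝ) < (n:ℝ) - 1 := by linarith
  have hfl : (0:ℤ) ≤ ⌊u * ((n:ℝ)-1)⌋ := Int.floor_nonneg.2 (by positivity)
  set J : ℕ := ⌊u * ((n:ℝ)-1)⌋.toNat + 1 with hJdef
  have hJz : (J : ℤ) = ⌊u * ((n:ℝ)-1)⌋ + 1 := by
    rw [hJdef]; push_cast [Int.toNat_of_nonneg hfl]; ring
  have hJc : (J:ℝ) = (⌊u * ((n:ℝ)-1)⌋ : ℝ) + 1 := by exact_mod_cast hJz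
  have h1 : u * ((n:ℝ)-1) < J := by rw [hJc]; exact Int.lt_floor_add_one _
  have h2 : (J:ℝ) ≤ u * ((n:ℝ)-1) + 1 := by
    rw [hJc]; have := Int.floor_le (u * ((n:ℝ)-1)); linarith
  have hmul : u * ((n:ℝ)-1) + 1 < v * ((n:ℝ)-1) := by
    have h := mul_lt_mul_of_pos_right huv hc0
    have he : (u + 1/((n:ℝ)-1)) * ((n:ℝ)-1) = u * ((n:ℝ)-1) + 1 := by field_simp
    rw [he] at h; exact h
  have hJv : (J:ℝ) < v * ((n:ℝ)-1) := by linarith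
  have hJn : J < n := by
    have hvc : v * ((n:ℝ)-1) ≤ (n:ℝ) - 1 := by nlinarith
    have h3 : (J:ℝ) < (n:ℝ) := by linarith
    exact_mod_cast h3
  refine ⟨⟨J, hJn⟩, ?_, ?_⟩
  · have he : ((⟨J, hJn⟩ : Fin n) : ℝ) = (J:ℝ) := by simp
    rw [he, lt_div_iff₀ hc0]; exact h1
  · have he : ((⟨J, hJn⟩ : Fin n) : ℝ) = (J:ℝ) := by simp
    rw [he, div_lt_iff₀ hc0]; exact hJv

/-- If the moving label `0` is adjacent to the stationary label `j.succ` in a `k`-perturbed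
sorted path, then the true position `t` of the moving point is close to the grid point of `j`. -/
private lemma gap_bound {n : ℕ} (hn : 2 ≤ n) {k t : ℝ} (hk : 0 < k)
    (ht0 : 0 ≤ t) (ht1 : t ≤ 1) {y : Fin (n+1) → ℝ}
    (hy0 : |y 0 - t| ≤ k) (hys : ∀ j : Fin n, |y j.succ - (j:ℝ)/((n:ℝ)-1)| ≤ k)
    {G : SimpleGraph (Fin (n+1))} (hG : IsSortedPath y G) {j : Fin n}
    (hadj : G.Adj 0 j.succ) :
    |t - (j:ℝ)/((n:ℝ)-1)| ≤ 4*k + 1/((n:ℝ)-1) := by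
  have hc : (1:ℝ) ≤ (n:ℝ) - 1 := by
    have h2 : (2:ℝ) ≤ (n:ℝ) := by exact_mod_cast hn
    linarith
  have hc0 : (0:ℝ) < (n:ℝ) - 1 := by linarith
  set p := (j:ℝ)/((n:ℝ)-1) with hpdef
  have hp0 : 0 ≤ p := by positivity
  have hp1 : p ≤ 1 := by
    rw [hpdef, div_le_one hc0]
    have hj : (j:ℕ) + 1 ≤ n := j.isLt
    have hj' : ((j:ℕ):ℝ) + 1 ≤ (n:ℝ) := by exact_mod_cast hj
    linarith
  have hy0' := abs_le.mp hy0
  have hyj' := abs_le.mp (hys j)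
  have hδ0 : 0 < 1/((n:ℝ)-1) := by positivity
  rcases (hG 0 j.succ).mp hadj with ⟨hlt, hno⟩ | ⟨hlt, hno⟩
  · -- y 0 < y j.succ : moving point just below the grid point
    have hgap : y j.succ - y 0 ≤ 2*k + 1/((n:ℝ)-1) := by
      by_contra hbig
      push_neg at hbig
      obtain ⟨j', hj'1, hj'2⟩ := grid_point hn (u := y 0 + k) (v := y j.succ - k)
        (by linarith) (by linarith) (by linarith)
      have hb := abs_le.mp (hys j')
      exact hno j'.succ ⟨by linarith, by linarith⟩
    rw [abs_le]; constructor <;> linarith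
  · -- y j.succ < y 0 : moving point just above the grid point
    have hgap : y 0 - y j.succ ≤ 2*k + 1/((n:ℝ)-1) := by
      by_contra hbig
      push_neg at hbig
      obtain ⟨j', hj'1, hj'2⟩ := grid_point hn (u := y j.succ + k) (v := y 0 - k)
        (by linarith) (by linarith) (by linarith)
      have hb := abs_le.mp (hys j')
      exact hno j'.succ ⟨by linarith, by linarith⟩
    rw [abs_le]; constructor <;> linarith

/-- In any `k`-perturbed sorted path with `k < 1/2`, the moving label `0` has a neighbor. -/
private lemma neighbor_exists {n : ℕ} (hn : 2 ≤ n) {k : ℝ} (hk : 0 < k) (hk2 : k < 1/2)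
    {y : Fin (n+1) → ℝ}
    (hys : ∀ j : Fin n, |y j.succ - (j:ℝ)/((n:ℝ)-1)| ≤ k)
    {G : SimpleGraph (Fin (n+1))} (hG : IsSortedPath y G) :
    ∃ j : Fin n, G.Adj 0 j.succ := by
  have hc : (1:ℝ) ≤ (n:ℝ) - 1 := by
    have h2 : (2:ℝ) ≤ (n:ℝ) := by exact_mod_cast hn
    linarith
  have hc0 : (0:ℝ) < (n:ℝ) - 1 := by linarith
  have hn0 : 0 < n := by omega
  set j0 : Fin n := ⟨0, hn0⟩ with hj0def
  set jn : Fin n := ⟨n-1, by omega⟩ with hjndef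
  have h0 : |y j0.succ - 0| ≤ k := by
    have := hys j0
    have he : ((j0 : ℕ) : ℝ)/((n:ℝ)-1) = 0 := by rw [hj0def]; simp
    rwa [he] at this
  have h1 : |y jn.succ - 1| ≤ k := by
    have := hys jn
    have he : ((jn : ℕ) : ℝ)/((n:ℝ)-1) = 1 := by
      rw [hjndef]
      have : (((n-1 : ℕ) : ℝ)) = (n:ℝ) - 1 := by
        have : (1:ℕ) ≤ n := by omega
        push_cast [Nat.cast_sub this]; ring
      simp only [Fin.val_mk]
      rw [this, div_self (ne_of_gt hc0)]
    rwa [he] at this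
  have h0' := abs_le.mp h0
  have h1' := abs_le.mp h1
  have hne : ∃ l : Fin (n+1), y l ≠ y 0 := by
    by_contra h
    push_neg at h
    have e0 := h j0.succ
    have e1 := h jn.succ
    rw [e0] at h0'
    rw [e1] at h1'
    linarith
  obtain ⟨l, hl⟩ := hne
  rcases lt_or_gt_of_ne hl with hlt | hlt
  · -- some point below y 0: take the largest one
    have hne' : (Finset.univ.filter (fun a => y a < y 0)).Nonempty :=
      ⟨l, by simp [hlt]⟩
    obtain ⟨b, hbmem, hbmax⟩ := Finset.exists_max_image _ y hne'
    simp only [Finset.mem_filter, Finset.mem_univ, true_and] at hbmem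
    have hb0 : b ≠ 0 := by
      intro h
      rw [h] at hbmem
      exact lt_irrefl _ hbmem
    obtain ⟨j, hj⟩ := Fin.exists_succ_eq_of_ne_zero hb0
    refine ⟨j, ?_⟩
    rw [hj]
    refine (hG 0 b).mpr (Or.inr ⟨hbmem, fun l'' hl'' => ?_⟩)
    have : y l'' ≤ y b := hbmax l'' (by simp [hl''.2])
    exact absurd this (not_le.2 hl''.1)
  · -- some point above y 0: take the smallest one
    have hne' : (Finset.univ.filter (fun a => y 0 < y a)).Nonempty :=
      ⟨l, by simp [hlt]⟩
    obtain ⟨b, hbmem, hbmin⟩ := Finset.exists_min_image _ y hne'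
    simp only [Finset.mem_filter, Finset.mem_univ, true_and] at hbmem
    have hb0 : b ≠ 0 := by
      intro h
      rw [h] at hbmem
      exact lt_irrefl _ hbmem
    obtain ⟨j, hj⟩ := Fin.exists_succ_eq_of_ne_zero hb0
    refine ⟨j, ?_⟩
    rw [hj]
    refine (hG 0 b).mpr (Or.inl ⟨hbmem, fun l'' hl'' => ?_⟩)
    have : y b ≤ y l'' := hbmin l'' (by simp [hl''.1])
    exact absurd this (not_le.2 hl''.2)

/-- Lower bound on the number of solution changes for one-dimensional kinetic EMST.
`n ≥ 2` stationary points sit equidistantly at `0, 1/(n-1), …, 1` and one extra point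
traverses `[0,1]` (position `t` at time `t`).  Any maintenance scheme `sol` that is
`k`-optimal at every time (i.e. `sol t` is the sorted-order path of some configuration `y`
displacing each point by at most `k`) and is piecewise constant with `m` pieces covering
`[0,1)` must satisfy `m ≥ min(1/k, n)/64`, i.e. a full traversal forces
`Ω(min(1/k, n))` solution changes. -/
theorem one_dim_event_lower_bound {n : ℕ} (hn : 2 ≤ n) (k : ℝ) (hk : 0 < k)
    (x : ℝ → Fin (n + 1) → ℝ)
    (hx0 : ∀ t : ℝ, x t 0 = t)
    (hxs : ∀ (t : ℝ) (j : Fin n), x t j.succ = (j : ℝ) / ((n : ℝ) - 1))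
    (sol : ℝ → SimpleGraph (Fin (n + 1)))
    (hkopt : ∀ t ∈ Set.Icc (0 : ℝ) 1, ∃ y : Fin (n + 1) → ℝ,
      (∀ i, |y i - x t i| ≤ k) ∧ IsSortedPath y (sol t))
    (m : ℕ) (τ : Fin (m + 1) → ℝ) (hτm : Monotone τ)
    (hτ0 : τ 0 = 0) (hτ1 : τ (Fin.last m) = 1)
    (hpiece : ∀ i : Fin m, ∀ t₁ ∈ Set.Ico (τ i.castSucc) (τ i.succ),
      ∀ t₂ ∈ Set.Ico (τ i.castSucc) (τ i.succ), sol t₁ = sol t₂) :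
    min (1 / k) (n : ℝ) / 64 ≤ (m : ℝ) := by
  have hc : (1:ℝ) ≤ (n:ℝ) - 1 := by
    have h2 : (2:ℝ) ≤ (n:ℝ) := by exact_mod_cast hn
    linarith
  have hc0 : (0:ℝ) < (n:ℝ) - 1 := by linarith
  have hm1 : 1 ≤ m := by
    rcases Nat.eq_zero_or_pos m with h | h
    · subst h
      rw [show (Fin.last 0) = 0 from rfl, hτ0] at hτ1
      exact absurd hτ1 (by norm_num)
    · exact h
  rcases le_or_gt (min (1/k) (n:ℝ)) 64 with hsmall | hbig
  · have : (1:ℝ) ≤ (m:ℝ) := by exact_mod_cast hm1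
    linarith
  · have hk64 : 64 < 1/k := lt_of_lt_of_le hbig (min_le_left _ _)
    have hk64' : 64 * k < 1 := (lt_div_iff₀ hk).mp hk64
    have hk2 : k < 1/2 := by linarith
    have hδ0 : 0 < 1/((n:ℝ)-1) := by positivity
    have hB0 : 0 < 8*k + 2/((n:ℝ)-1) := by positivity
    -- each piece has length at most B
    have piece : ∀ i : Fin m, τ i.succ ≤ τ i.castSucc + (8*k + 2/((n:ℝ)-1)) := by
      intro i
      by_contra hcon
      push_neg at hcon
      have hab' : τ i.castSucc < τ i.succ := by linarith
      have ha0 : 0 ≤ τ i.castSucc := by rw [← hτ0]; exact hτm (Fin.zero_le _)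
      have hb1 : τ i.succ ≤ 1 := by rw [← hτ1]; exact hτm (Fin.le_last _)
      have ha1 : τ i.castSucc ≤ 1 := le_trans (le_of_lt hab') hb1
      obtain ⟨y₁, hy₁, hG₁⟩ := hkopt (τ i.castSucc) ⟨ha0, ha1⟩
      have hy₁0 : |y₁ 0 - τ i.castSucc| ≤ k := by have := hy₁ 0; rwa [hx0] at this
      have hy₁s : ∀ j : Fin n, |y₁ j.succ - (j:ℝ)/((n:ℝ)-1)| ≤ k := fun j => by
        have := hy₁ j.succ; rwa [hxs] at this
      obtain ⟨j, hadj⟩ := neighbor_exists hn hk hk2 hy₁s hG₁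
      have hgap1' := abs_le.mp (gap_bound hn hk ha0 ha1 hy₁0 hy₁s hG₁ hadj)
      have h := hgap1'.1
      have hcb : (j:ℝ)/((n:ℝ)-1) + (4*k + 1/((n:ℝ)-1)) < τ i.succ := by
        linarith [show (2:ℝ)/((n:ℝ)-1) = 1/((n:ℝ)-1) + 1/((n:ℝ)-1) from by ring]
      have hcb2 : ((j:ℝ)/((n:ℝ)-1) + (4*k + 1/((n:ℝ)-1)) + τ i.succ)/2 < τ i.succ := by
        linarith
      have hcb3 : (j:ℝ)/((n:ℝ)-1) + (4*k + 1/((n:ℝ)-1)) <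
          ((j:ℝ)/((n:ℝ)-1) + (4*k + 1/((n:ℝ)-1)) + τ i.succ)/2 := by linarith
      have ht₂a : τ i.castSucc ≤
          max (τ i.castSucc) (((j:ℝ)/((n:ℝ)-1) + (4*k + 1/((n:ℝ)-1)) + τ i.succ)/2) :=
        le_max_left _ _
      have ht₂b : max (τ i.castSucc) (((j:ℝ)/((n:ℝ)-1) + (4*k + 1/((n:ℝ)-1)) + τ i.succ)/2)
          < τ i.succ := max_lt hab' hcb2
      have ht₂c : (j:ℝ)/((n:ℝ)-1) + (4*k + 1/((n:ℝ)-1)) <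
          max (τ i.castSucc) (((j:ℝ)/((n:ℝ)-1) + (4*k + 1/((n:ℝ)-1)) + τ i.succ)/2) :=
        lt_of_lt_of_le hcb3 (le_max_right _ _)
      obtain ⟨t₂, ht₂a, ht₂b, ht₂c⟩ :
          ∃ t₂ : ℝ, τ i.castSucc ≤ t₂ ∧ t₂ < τ i.succ ∧
            (j:ℝ)/((n:ℝ)-1) + (4*k + 1/((n:ℝ)-1)) < t₂ :=
        ⟨_, ht₂a, ht₂b, ht₂c⟩
      have ht₂0 : 0 ≤ t₂ := le_trans ha0 ht₂a
      have ht₂1 : t₂ ≤ 1 := le_trans (le_of_lt ht₂b) hb1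
      obtain ⟨y₂, hy₂, hG₂⟩ := hkopt t₂ ⟨ht₂0, ht₂1⟩
      have hsol : sol t₂ = sol (τ i.castSucc) :=
        hpiece i t₂ ⟨ht₂a, ht₂b⟩ (τ i.castSucc) ⟨le_refl _, hab'⟩
      rw [hsol] at hG₂
      have hy₂0 : |y₂ 0 - t₂| ≤ k := by have := hy₂ 0; rwa [hx0] at this
      have hy₂s : ∀ j : Fin n, |y₂ j.succ - (j:ℝ)/((n:ℝ)-1)| ≤ k := fun j => by
        have := hy₂ j.succ; rwa [hxs] at this
      have hgap2' := (abs_le.mp (gap_bound hn hk ht₂0 ht₂1 hy₂0 hy₂s hG₂ hadj)).2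
      linarith
    -- telescope
    have tele : ∀ i : ℕ, ∀ h : i ≤ m,
        τ ⟨i, Nat.lt_succ_of_le h⟩ ≤ (i:ℝ) * (8*k + 2/((n:ℝ)-1)) := by
      intro i
      induction i with
      | zero =>
        intro h
        have e : (⟨0, Nat.lt_succ_of_le h⟩ : Fin (m+1)) = 0 := rfl
        rw [e, hτ0]
        simp
      | succ i ih =>
        intro h
        have hi : i ≤ m := Nat.le_of_succ_le h
        have him : i < m := h
        have step := piece ⟨i, him⟩
        have e1 : (⟨i, him⟩ : Fin m).succ = (⟨i+1, Nat.lt_succ_of_le h⟩ : Fin (m+1)) := rfl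
        have e2 : (⟨i, him⟩ : Fin m).castSucc = (⟨i, Nat.lt_succ_of_le hi⟩ : Fin (m+1)) := rfl
        rw [e1, e2] at step
        have hih := ih hi
        have e3 : ((i+1 : ℕ):ℝ) * (8*k + 2/((n:ℝ)-1))
            = (i:ℝ) * (8*k + 2/((n:ℝ)-1)) + (8*k + 2/((n:ℝ)-1)) := by push_cast; ring
        rw [e3]
        linarith
    have h1mB : 1 ≤ (m:ℝ) * (8*k + 2/((n:ℝ)-1)) := by
      have hm := tele m le_rfl
      have e : (⟨m, Nat.lt_succ_of_le le_rfl⟩ : Fin (m+1)) = Fin.last m := rfl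
      rw [e, hτ1] at hm
      exact hm
    -- final arithmetic
    have hmin1 : min (1/k) (n:ℝ) ≤ 1/k := min_le_left _ _
    have hmin2 : min (1/k) (n:ℝ) ≤ (n:ℝ) := min_le_right _ _
    have hminpos : 0 < min (1/k) (n:ℝ) := by
      apply lt_min (by positivity)
      linarith
    have t1 : min (1/k) (n:ℝ) * (8*k) ≤ 8 := by
      have h8 : (0:ℝ) ≤ 8*k := by positivity
      have := mul_le_mul_of_nonneg_right hmin1 h8
      have he : (1/k) * (8*k) = 8 := by field_simp
      linarith [he ▸ this]
    have t2 : min (1/k) (n:ℝ) * (2/((n:ℝ)-1)) ≤ 4 := by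
      have h2 : (0:ℝ) ≤ 2/((n:ℝ)-1) := by positivity
      have hm := mul_le_mul_of_nonneg_right hmin2 h2
      have he : (n:ℝ) * (2/((n:ℝ)-1)) = 2*(n:ℝ)/((n:ℝ)-1) := by ring
      have hle : 2*(n:ℝ)/((n:ℝ)-1) ≤ 4 := by
        rw [div_le_iff₀ hc0]
        linarith
      linarith [he ▸ hm]
    have hBmin : min (1/k) (n:ℝ) * (8*k + 2/((n:ℝ)-1)) ≤ 64 := by
      have he : min (1/k) (n:ℝ) * (8*k + 2/((n:ℝ)-1))
          = min (1/k) (n:ℝ) * (8*k) + min (1/k) (n:ℝ) * (2/((n:ℝ)-1)) := by ring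
      linarith [he.le, he.ge]
    -- min/64 ≤ m
    by_contra hcon2
    push_neg at hcon2
    have hmul : (m:ℝ)*(8*k + 2/((n:ℝ)-1)) < (min (1/k) (n:ℝ)/64)*(8*k + 2/((n:ℝ)-1)) :=
      mul_lt_mul_of_pos_right hcon2 hB0
    have he : (min (1/k) (n:ℝ)/64)*(8*k + 2/((n:ℝ)-1))
        = min (1/k) (n:ℝ)*(8*k + 2/((n:ℝ)-1))/64 := by ring
    rw [he] at hmul
    linarith
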